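/- arXiv:2403.00332 — 3 statements merged into one kernel-verified Lean document; each statement's English description precedes it below -/
import Mathlib

section
/- For every p ∈ Σ(f), the vector σ(p) is orthogonal to the range of Df_p, i.e. ⟨σ(p), Df_p(u)⟩ = 0 for every u ∈ ℝ^n. -/
/-!
At every point `p`, `σ(p)` is orthogonal to the columns `∂f/∂x_j`, `∂f/∂y`, `∂f/∂s_j` of `Df_p`,
so `⟪σ(p), Df_p u⟫` only sees the `z`-component of `u`; its coefficient is a combination of the
equations `x_{2i-1} + 2 z x_{2i} = 0` and `y + 3 z² = 0` cutting out `Σ(f)`, i.e. of the entries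
of the column `∂f/∂z`.
-/

noncomputable section

open scoped RealInnerProductSpace

/-- Index type for the domain `ℝⁿ`, `n = 2k+2+m`: coordinates `x` (2k of them),
`y`, `z`, and `s` (m of them). -/
abbrev DomIx (k m : ℕ) := (Fin (2*k)) ⊕ Unit ⊕ Unit ⊕ (Fin m)

/-- The domain `ℝⁿ` with its Euclidean inner product. -/
abbrev Dom (k m : ℕ) := EuclideanSpace ℝ (DomIx k m)

/-- Index type for the codomain `ℝ^{n+k}`: coordinates `X` (2k+1), `Y` (k), `Z`, `S` (m). -/
abbrev CodIx (k m : ℕ) := (Fin (2*k+1)) ⊕ (Fin k) ⊕ Unit ⊕ (Fin m)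

/-- The codomain `ℝ^{n+k}` with its Euclidean inner product. -/
abbrev Cod (k m : ℕ) := EuclideanSpace ℝ (CodIx k m)

/-- The `x`-coordinates of a point (0-based: `px p j` is `x_{j+1}`). -/
def px {k m : ℕ} (p : Dom k m) (j : Fin (2*k)) : ℝ := p (Sum.inl j)

/-- The `y`-coordinate of a point. -/
def py {k m : ℕ} (p : Dom k m) : ℝ := p (Sum.inr (Sum.inl ()))

/-- The `z`-coordinate of a point. -/
def pz {k m : ℕ} (p : Dom k m) : ℝ := p (Sum.inr (Sum.inr (Sum.inl ())))

/-- The `s`-coordinates of a point. -/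
def ps {k m : ℕ} (p : Dom k m) (j : Fin m) : ℝ := p (Sum.inr (Sum.inr (Sum.inr j)))

/-- The (0-based) index of the coordinate `x_{2i-1}` (1-based), for `i : Fin k` (0-based). -/
def xo {k : ℕ} (i : Fin k) : Fin (2*k) := ⟨2*i.1, by have := i.isLt; omega⟩

/-- The (0-based) index of the coordinate `x_{2i}` (1-based), for `i : Fin k` (0-based). -/
def xe {k : ℕ} (i : Fin k) : Fin (2*k) := ⟨2*i.1+1, by have := i.isLt; omega⟩

/-- The cusp normal form `f : ℝⁿ → ℝ^{n+k}`:
`X_i = x_i`, `X_{2k+1} = y`, `Y_i = z x_{2i-1} + z² x_{2i}`, `Z = z y + z³`, `S_j = s_j`. -/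
def cuspF (k m : ℕ) (p : Dom k m) : Cod k m :=
  (EuclideanSpace.equiv (CodIx k m) ℝ).symm fun q =>
    match q with
    | Sum.inl j => if h : j.1 < 2*k then px p ⟨j.1, h⟩ else py p
    | Sum.inr (Sum.inl i) => pz p * px p (xo i) + (pz p)^2 * px p (xe i)
    | Sum.inr (Sum.inr (Sum.inl _)) => pz p * py p + (pz p)^3
    | Sum.inr (Sum.inr (Sum.inr j)) => ps p j

/-- The singular set `Σ(f)` of the cusp normal form:
`x_{2i-1} + 2 z x_{2i} = 0` for all `i` and `y + 3z² = 0`. -/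
def SingSet (k m : ℕ) : Set (Dom k m) :=
  {p | (∀ i : Fin k, px p (xo i) + 2 * pz p * px p (xe i) = 0) ∧ py p + 3 * (pz p)^2 = 0}

/-- The standard basis vector `e_z` of the domain. -/
def ez (k m : ℕ) : Dom k m := EuclideanSpace.single (Sum.inr (Sum.inr (Sum.inl ()))) 1


/-- The section `σ : ℝⁿ → ℝ^{n+k}` given coordinatewise (1-based, `1 ≤ i ≤ k`) by
`σ_{X_{2i−1}} = −2z x_{2i}/(1+z²+z⁴)`, `σ_{X_{2i}} = −2z² x_{2i}/(1+z²+z⁴)`,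
`σ_{X_{2k+1}} = −6z²/(1+z²)`, `σ_{Y_i} = 2x_{2i}/(1+z²+z⁴)`, `σ_Z = 6z/(1+z²)`, `σ_{S_j} = 0`. -/
def sigmaF (k m : ℕ) (p : Dom k m) : Cod k m :=
  (EuclideanSpace.equiv (CodIx k m) ℝ).symm fun q =>
    match q with
    | Sum.inl j =>
        if h : j.1 < 2*k then
          if h2 : j.1 % 2 = 0 then
            -- the coordinate `X_{2i-1}` (1-based) with `2i-1 = j.1+1`, so `x_{2i} = x`-coord `j.1+1`
            -2 * pz p * px p ⟨j.1+1, by omega⟩ / (1 + (pz p)^2 + (pz p)^4)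
          else
            -- the coordinate `X_{2i}` (1-based) with `2i = j.1+1`, so `x_{2i} = x`-coord `j.1`
            -2 * (pz p)^2 * px p ⟨j.1, h⟩ / (1 + (pz p)^2 + (pz p)^4)
        else
          -- the coordinate `X_{2k+1}`
          -6 * (pz p)^2 / (1 + (pz p)^2)
    | Sum.inr (Sum.inl i) => 2 * px p (xe i) / (1 + (pz p)^2 + (pz p)^4)
    | Sum.inr (Sum.inr (Sum.inl _)) => 6 * pz p / (1 + (pz p)^2)
    | Sum.inr (Sum.inr (Sum.inr _)) => 0

theorem fderiv_piLp_apply {𝕜 ι H : Type*} {E : ι → Type*} [NontriviallyNormedField 𝕜]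
    [NormedAddCommGroup H] [NormedSpace 𝕜 H] [∀ i, NormedAddCommGroup (E i)]
    [∀ i, NormedSpace 𝕜 (E i)] [Fintype ι] {q : ENNReal} [Fact (1 ≤ q)] {f : H → PiLp q E}
    {y : H} (hf : DifferentiableAt 𝕜 f y) (u : H) (i : ι) :
    fderiv 𝕜 f y u i = fderiv 𝕜 (fun x => f x i) y u := by
  have h := (PiLp.hasFDerivAt_apply (𝕜 := 𝕜) q (f y) i).comp y hf.hasFDerivAt
  rw [show (fun x => f x i) = (fun g : PiLp q E => g i) ∘ f from rfl, h.fderiv]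
  rfl

theorem sum_eq_sum_xo_add_xe {M : Type*} [AddCommMonoid M] {k : ℕ} (g : Fin (2 * k) → M) :
    ∑ j, g j = ∑ i : Fin k, (g (xo i) + g (xe i)) := by
  rw [← (finProdFinEquiv.trans (finCongr (Nat.mul_comm k 2))).sum_comp, Fintype.sum_prod_type]
  refine Finset.sum_congr rfl fun i _ => ?_
  rw [Fin.sum_univ_two]
  congr 2 <;> ext
  · simp [xo]
  · simp [xe, add_comm]

section
variable {k m : ℕ} (p u : Dom k m)

theorem hasFDerivAt_coord (q : DomIx k m) :
    HasFDerivAt (fun v : Dom k m => v q) (EuclideanSpace.proj q : Dom k m →L[ℝ] ℝ) p :=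
  PiLp.hasFDerivAt_apply 2 p q

theorem fderiv_coord_apply (q : DomIx k m) : fderiv ℝ (fun v : Dom k m => v q) p u = u q := by
  rw [(hasFDerivAt_coord p q).fderiv]
  rfl

theorem cuspF_apply_castSucc (j : Fin (2 * k)) : cuspF k m p (Sum.inl j.castSucc) = px p j := by
  simp [cuspF]

theorem cuspF_apply_last : cuspF k m p (Sum.inl (Fin.last (2 * k))) = py p := by
  simp [cuspF]

theorem differentiable_cuspF : Differentiable ℝ (cuspF k m) := by
  rw [differentiable_piLp]
  rintro (j | i | _ | j) <;>
    simp only [cuspF, px, py, pz, ps, PiLp.continuousLinearEquiv_symm_apply]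
  · by_cases h : j.1 < 2 * k <;> simp only [h, ↓reduceDIte] <;> fun_prop
  all_goals fun_prop

theorem fderiv_cuspF_apply_castSucc (j : Fin (2 * k)) :
    fderiv ℝ (cuspF k m) p u (Sum.inl j.castSucc) = px u j := by
  simp only [fderiv_piLp_apply (differentiable_cuspF _), cuspF_apply_castSucc, px,
    fderiv_coord_apply]

theorem fderiv_cuspF_apply_last :
    fderiv ℝ (cuspF k m) p u (Sum.inl (Fin.last (2 * k))) = py u := by
  simp only [fderiv_piLp_apply (differentiable_cuspF _), cuspF_apply_last, py,
    fderiv_coord_apply]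

theorem fderiv_cuspF_apply_Y (i : Fin k) :
    fderiv ℝ (cuspF k m) p u (Sum.inr (Sum.inl i)) =
      pz p * px u (xo i) + pz p ^ 2 * px u (xe i)
        + (px p (xo i) + 2 * pz p * px p (xe i)) * pz u := by
  have hz := hasFDerivAt_coord p (Sum.inr (Sum.inr (Sum.inl ())))
  have h : HasFDerivAt (fun v => cuspF k m v (Sum.inr (Sum.inl i))) _ p :=
    (hz.mul (hasFDerivAt_coord p (Sum.inl (xo i)))).add
      ((hz.pow 2).mul (hasFDerivAt_coord p (Sum.inl (xe i))))
  rw [fderiv_piLp_apply (differentiable_cuspF _), h.fderiv]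
  simp only [add_apply, smul_apply, PiLp.proj_apply, smul_eq_mul, nsmul_eq_mul,
    Nat.add_one_sub_one, pow_one, px, pz]
  ring

theorem fderiv_cuspF_apply_Z (t : Unit) :
    fderiv ℝ (cuspF k m) p u (Sum.inr (Sum.inr (Sum.inl t))) =
      pz p * py u + (py p + 3 * pz p ^ 2) * pz u := by
  have hz := hasFDerivAt_coord p (Sum.inr (Sum.inr (Sum.inl ())))
  have h : HasFDerivAt (fun v => cuspF k m v (Sum.inr (Sum.inr (Sum.inl t)))) _ p :=
    (hz.mul (hasFDerivAt_coord p (Sum.inr (Sum.inl ())))).add (hz.pow 3)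
  rw [fderiv_piLp_apply (differentiable_cuspF _), h.fderiv]
  simp only [add_apply, smul_apply, PiLp.proj_apply, smul_eq_mul, nsmul_eq_mul,
    Nat.add_one_sub_one, py, pz]
  ring

theorem sigmaF_apply_xo (i : Fin k) :
    sigmaF k m p (Sum.inl (xo i).castSucc) =
      -2 * pz p * px p (xe i) / (1 + pz p ^ 2 + pz p ^ 4) := by
  simp [sigmaF, xo, xe]

theorem sigmaF_apply_xe (i : Fin k) :
    sigmaF k m p (Sum.inl (xe i).castSucc) =
      -2 * pz p ^ 2 * px p (xe i) / (1 + pz p ^ 2 + pz p ^ 4) := by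
  simp [sigmaF, xe, show 2 * i.1 + 1 < 2 * k by omega]

theorem sigmaF_apply_last :
    sigmaF k m p (Sum.inl (Fin.last (2 * k))) = -6 * pz p ^ 2 / (1 + pz p ^ 2) := by
  simp [sigmaF]

theorem sigmaF_apply_Y (i : Fin k) :
    sigmaF k m p (Sum.inr (Sum.inl i)) = 2 * px p (xe i) / (1 + pz p ^ 2 + pz p ^ 4) := rfl

theorem sigmaF_apply_Z (t : Unit) :
    sigmaF k m p (Sum.inr (Sum.inr (Sum.inl t))) = 6 * pz p / (1 + pz p ^ 2) := rfl

theorem sigmaF_apply_S (j : Fin m) : sigmaF k m p (Sum.inr (Sum.inr (Sum.inr j))) = 0 := rfl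

theorem inner_sigmaF_fderiv_cuspF :
    ⟪sigmaF k m p, fderiv ℝ (cuspF k m) p u⟫ =
      (∑ i, 2 * px p (xe i) / (1 + pz p ^ 2 + pz p ^ 4) * (px p (xo i) + 2 * pz p * px p (xe i))
        + 6 * pz p / (1 + pz p ^ 2) * (py p + 3 * pz p ^ 2)) * pz u := by
  simp only [PiLp.inner_apply, RCLike.inner_apply', conj_trivial, Fintype.sum_sum_type,
    Fin.sum_univ_castSucc, sum_eq_sum_xo_add_xe, Fintype.sum_unique, sigmaF_apply_xo,
    sigmaF_apply_xe, sigmaF_apply_last, sigmaF_apply_Y, sigmaF_apply_Z, sigmaF_apply_S,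
    fderiv_cuspF_apply_castSucc, fderiv_cuspF_apply_last, fderiv_cuspF_apply_Y,
    fderiv_cuspF_apply_Z, zero_mul, Finset.sum_const_zero, add_zero]
  rw [add_add_add_comm, ← Finset.sum_add_distrib]
  conv_rhs => rw [add_mul, Finset.sum_mul]
  congr 1
  · refine Finset.sum_congr rfl fun i _ => ?_
    ring
  · field_simp
    ring

end

theorem statement3_general (k m : ℕ) (p : Dom k m) (hp : p ∈ SingSet k m) :
    ∀ u : Dom k m, ⟪sigmaF k m p, fderiv ℝ (cuspF k m) p u⟫ = 0 := by
  intro u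
  obtain ⟨hx, hyz⟩ := hp
  simp only [inner_sigmaF_fderiv_cuspF, hx, hyz, mul_zero, Finset.sum_const_zero, add_zero,
    zero_mul]

/-- for every `p ∈ Σ(f)`, the vector `σ(p)` is orthogonal to the range of `Df_p`. -/
theorem statement3 (k m : ℕ) (hk : 1 ≤ k) (p : Dom k m) (hp : p ∈ SingSet k m) :
    ∀ u : Dom k m, ⟪sigmaF k m p, fderiv ℝ (cuspF k m) p u⟫ = 0 :=
  statement3_general k m p hp
end
end

section
/- Let p = (x, y, z, s) ∈ ℝ^n and consider the derivative Df̃_{(p,0)} : ℝ^n × ℝ → ℝ^{n+k} of f̃ at (p, 0). If x = 0, y = 0 and z = 0, then the kernel of Df̃_{(p,0)} is the two-dimensional span of the vectors (e_z, 0) and (0, 1). If (x, y, z) ≠ (0, 0, 0), then dim ker Df̃_{(p,0)} ≤ 1. (In the cusp normal form, this says that the corank-2 locus of the de-suspension f̃ intersected with the slice ℝ^n × {0} is exactly the Σ^{1,1} locus {x = y = z = 0} of f, the key identity behind the theorem relating the cusp locus of a codimension-k cusp map to the corank-2 locus of its de-suspension.) -/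
noncomputable section

open scoped RealInnerProductSpace

/-- The de-suspension `f̃ : ℝⁿ × ℝ → ℝ^{n+k}`, `f̃(p, t) = f(p) + t σ(p)`. -/
def ftilde (k m : ℕ) (q : Dom k m × ℝ) : Cod k m :=
  cuspF k m q.1 + q.2 • sigmaF k m q.1

/-!
At `t = 0` the derivative of `f̃` is `(v, t) ↦ Df_p v + t σ(p)`. The `X`- and `S`-rows of `Df_p`
read off `v_x`, `v_y`, `v_s`, so a kernel vector is determined by `(v_z, t)`. Eliminating `v_x`
and `v_y` from the `Y_i`- and `Z`-rows leaves, by the choice of `σ`, the two relations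
`2 x_{2i} t + (x_{2i-1} + 2 z x_{2i}) v_z = 0` and `6 z t + (y + 3 z²) v_z = 0`.
If `x = y = z = 0` both are void and `σ(p) = 0`, so the kernel is the plane spanned by
`(e_z, 0)` and `(0, 1)`; otherwise one of them is a nontrivial linear relation on `(v_z, t)`.
-/

theorem hasFDerivAt_add_smul_at_zero {𝕜 E F : Type*} [NontriviallyNormedField 𝕜]
    [NormedAddCommGroup E] [NormedSpace 𝕜 E] [NormedAddCommGroup F] [NormedSpace 𝕜 F]
    {f σ : E → F} {f' : E →L[𝕜] F} {p : E} (hf : HasFDerivAt f f' p)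
    (hσ : DifferentiableAt 𝕜 σ p) :
    HasFDerivAt (fun q : E × 𝕜 => f q.1 + q.2 • σ q.1)
      (f'.comp (.fst 𝕜 E 𝕜) + (ContinuousLinearMap.snd 𝕜 E 𝕜).smulRight (σ p)) (p, 0) :=
  ((hf.comp _ hasFDerivAt_fst).add
    (hasFDerivAt_snd.smul (hσ.hasFDerivAt.comp _ hasFDerivAt_fst))).congr_fderiv
    (by ext <;> simp)

theorem Submodule.finrank_add_one_le_of_disjoint_of_le_ker {K V W : Type*} [Field K]
    [AddCommGroup V] [Module K V] [AddCommGroup W] [Module K W] [FiniteDimensional K W]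
    {S : Submodule K V} {φ : V →ₗ[K] W} {ℓ : Module.Dual K W} (hℓ : ℓ ≠ 0)
    (hφ : Disjoint S (LinearMap.ker φ)) (hS : S ≤ LinearMap.ker (ℓ ∘ₗ φ)) :
    Module.finrank K S + 1 ≤ Module.finrank K W := by
  let ψ : S →ₗ[K] LinearMap.ker ℓ := (φ.domRestrict S).codRestrict _ fun w => hS w.2
  have hψ : Function.Injective ψ := by
    rw [← LinearMap.ker_eq_bot, LinearMap.ker_eq_bot']
    intro w hw
    exact Subtype.ext (Submodule.disjoint_def.1 hφ w w.2 (congrArg Subtype.val hw))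
  rw [← Module.Dual.finrank_ker_add_one_of_ne_zero hℓ]
  exact Nat.add_le_add_right (LinearMap.finrank_le_finrank_of_injective hψ) 1

namespace CuspNormalForm

variable {k m : ℕ}

local notation "𝒦" p:max =>
  LinearMap.ker (ContinuousLinearMap.toLinearMap (fderiv ℝ (ftilde _ _) (p, 0)))

abbrev yIdx : DomIx k m := Sum.inr (Sum.inl ())

abbrev zIdx : DomIx k m := Sum.inr (Sum.inr (Sum.inl ()))

theorem cuspF_apply_X (p : Dom k m) (j : Fin (2*k+1)) :
    cuspF k m p (Sum.inl j) = if h : j.1 < 2*k then px p ⟨j.1, h⟩ else py p := rfl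

theorem sigmaF_apply_X (p : Dom k m) (j : Fin (2*k+1)) :
    sigmaF k m p (Sum.inl j) =
      if h : j.1 < 2*k then
        if h2 : j.1 % 2 = 0 then
          -2 * pz p * px p ⟨j.1+1, by omega⟩ / (1 + (pz p)^2 + (pz p)^4)
        else -2 * (pz p)^2 * px p ⟨j.1, h⟩ / (1 + (pz p)^2 + (pz p)^4)
      else -6 * (pz p)^2 / (1 + (pz p)^2) := rfl

theorem sigmaF_apply_X_castSucc (p : Dom k m) (j : Fin (2*k)) :
    sigmaF k m p (Sum.inl j.castSucc) =
      if h : j.1 % 2 = 0 then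
        -2 * pz p * px p ⟨j.1+1, by omega⟩ / (1 + (pz p)^2 + (pz p)^4)
      else -2 * (pz p)^2 * px p j / (1 + (pz p)^2 + (pz p)^4) :=
  dif_pos j.isLt

theorem sigmaF_apply_X_xo (p : Dom k m) (i : Fin k) :
    sigmaF k m p (Sum.inl (xo i).castSucc) =
      -2 * pz p * px p (xe i) / (1 + (pz p)^2 + (pz p)^4) := by
  rw [sigmaF_apply_X_castSucc, dif_pos (by simp [xo])]
  rfl

theorem sigmaF_apply_X_xe (p : Dom k m) (i : Fin k) :
    sigmaF k m p (Sum.inl (xe i).castSucc) =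
      -2 * (pz p)^2 * px p (xe i) / (1 + (pz p)^2 + (pz p)^4) := by
  rw [sigmaF_apply_X_castSucc, dif_neg (by simp [xe, Nat.add_mod])]

theorem sigmaF_apply_X_last (p : Dom k m) :
    sigmaF k m p (Sum.inl (Fin.last _)) = -6 * (pz p)^2 / (1 + (pz p)^2) := by
  rw [sigmaF_apply_X, dif_neg (by simp)]

theorem sigmaF_apply_Y (p : Dom k m) (i : Fin k) :
    sigmaF k m p (Sum.inr (Sum.inl i)) = 2 * px p (xe i) / (1 + (pz p)^2 + (pz p)^4) := rfl

theorem sigmaF_apply_Z (p : Dom k m) (u : Unit) :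
    sigmaF k m p (Sum.inr (Sum.inr (Sum.inl u))) = 6 * pz p / (1 + (pz p)^2) := rfl

theorem sigmaF_apply_S (p : Dom k m) (j : Fin m) :
    sigmaF k m p (Sum.inr (Sum.inr (Sum.inr j))) = 0 := rfl

theorem sigmaF_Y_sub_X (p : Dom k m) (i : Fin k) :
    sigmaF k m p (Sum.inr (Sum.inl i)) - pz p * sigmaF k m p (Sum.inl (xo i).castSucc)
      - (pz p)^2 * sigmaF k m p (Sum.inl (xe i).castSucc) = 2 * px p (xe i) := by
  rw [sigmaF_apply_Y, sigmaF_apply_X_xo, sigmaF_apply_X_xe]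
  field_simp
  ring

theorem sigmaF_Z_sub_X (p : Dom k m) :
    sigmaF k m p (Sum.inr (Sum.inr (Sum.inl ()))) - pz p * sigmaF k m p (Sum.inl (Fin.last _))
      = 6 * pz p := by
  rw [sigmaF_apply_Z, sigmaF_apply_X_last]
  field_simp
  ring

theorem differentiableAt_sigmaF (p : Dom k m) : DifferentiableAt ℝ (sigmaF k m) p := by
  rw [differentiableAt_euclidean]
  rintro (j | i | u | j)
  · simp only [sigmaF_apply_X, px, pz]
    split_ifs <;> fun_prop (disch := positivity)
  · simp only [sigmaF_apply_Y, px, pz]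
    fun_prop (disch := positivity)
  · simp only [sigmaF_apply_Z, pz]
    fun_prop (disch := positivity)
  · simp only [sigmaF_apply_S]
    fun_prop

def cuspDerivCoord (p : Dom k m) : CodIx k m → StrongDual ℝ (Dom k m)
  | Sum.inl j =>
      if h : j.1 < 2*k then EuclideanSpace.proj (Sum.inl ⟨j.1, h⟩) else EuclideanSpace.proj yIdx
  | Sum.inr (Sum.inl i) =>
      pz p • EuclideanSpace.proj (Sum.inl (xo i))
        + (pz p)^2 • EuclideanSpace.proj (Sum.inl (xe i))
        + (px p (xo i) + 2 * pz p * px p (xe i)) • EuclideanSpace.proj zIdx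
  | Sum.inr (Sum.inr (Sum.inl _)) =>
      pz p • EuclideanSpace.proj yIdx + (py p + 3 * (pz p)^2) • EuclideanSpace.proj zIdx
  | Sum.inr (Sum.inr (Sum.inr j)) => EuclideanSpace.proj (Sum.inr (Sum.inr (Sum.inr j)))

def cuspDeriv (p : Dom k m) : Dom k m →L[ℝ] Cod k m :=
  (EuclideanSpace.equiv (CodIx k m) ℝ).symm.toContinuousLinearMap ∘L .pi (cuspDerivCoord p)

theorem proj_comp_cuspDeriv (p : Dom k m) (q : CodIx k m) :
    EuclideanSpace.proj q ∘L cuspDeriv p = cuspDerivCoord p q := rfl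

theorem hasStrictFDerivAt_cuspF (p : Dom k m) :
    HasStrictFDerivAt (cuspF k m) (cuspDeriv p) p := by
  rw [hasStrictFDerivAt_euclidean]
  intro q
  rw [proj_comp_cuspDeriv]
  have hx (j : Fin (2*k)) :=
    (EuclideanSpace.proj (𝕜 := ℝ) (Sum.inl j : DomIx k m)).hasStrictFDerivAt (x := p)
  have hy := (EuclideanSpace.proj (𝕜 := ℝ) (yIdx : DomIx k m)).hasStrictFDerivAt (x := p)
  have hz := (EuclideanSpace.proj (𝕜 := ℝ) (zIdx : DomIx k m)).hasStrictFDerivAt (x := p)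
  rcases q with j | i | u | j
  · by_cases h : j.1 < 2*k
    · simp only [cuspF_apply_X, cuspDerivCoord, dif_pos h]
      exact hx _
    · simp only [cuspF_apply_X, cuspDerivCoord, dif_neg h]
      exact hy
  · refine ((hz.mul (hx (xo i))).add ((hz.pow 2).mul (hx (xe i)))).congr_fderiv ?_
    ext v
    simp only [PiLp.proj_apply, Nat.add_one_sub_one, pow_one, nsmul_eq_mul, Nat.cast_ofNat,
      add_apply, smul_apply, smul_eq_mul,
      cuspDerivCoord, pz, px]
    ring
  · refine (hz.mul hy |>.add (hz.pow 3)).congr_fderiv ?_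
    ext v
    simp only [PiLp.proj_apply, Nat.add_one_sub_one, nsmul_eq_mul, Nat.cast_ofNat,
      add_apply, smul_apply, smul_eq_mul,
      cuspDerivCoord, pz, py]
    ring
  · exact (EuclideanSpace.proj (𝕜 := ℝ) _).hasStrictFDerivAt

theorem hasFDerivAt_ftilde (p : Dom k m) :
    HasFDerivAt (ftilde k m) ((cuspDeriv p).comp (.fst ℝ (Dom k m) ℝ)
      + (ContinuousLinearMap.snd ℝ (Dom k m) ℝ).smulRight (sigmaF k m p)) (p, 0) :=
  hasFDerivAt_add_smul_at_zero (hasStrictFDerivAt_cuspF p).hasFDerivAt (differentiableAt_sigmaF p)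

theorem mem_ker_fderiv_ftilde_iff {p : Dom k m} {w : Dom k m × ℝ} :
    w ∈ 𝒦 p ↔ ∀ q, cuspDerivCoord p q w.1 + w.2 * sigmaF k m p q = 0 := by
  rw [LinearMap.mem_ker, ContinuousLinearMap.coe_coe, (hasFDerivAt_ftilde p).fderiv,
    PiLp.ext_iff]
  rfl

section Kernel

variable {p : Dom k m} {w : Dom k m × ℝ}

theorem X_eq_of_mem_ker (hw : w ∈ 𝒦 p) (j : Fin (2*k)) :
    w.1 (Sum.inl j) + w.2 * sigmaF k m p (Sum.inl j.castSucc) = 0 := by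
  simpa [cuspDerivCoord] using mem_ker_fderiv_ftilde_iff.1 hw (Sum.inl j.castSucc)

theorem X_last_eq_of_mem_ker (hw : w ∈ 𝒦 p) :
    w.1 yIdx + w.2 * sigmaF k m p (Sum.inl (Fin.last _)) = 0 := by
  simpa [cuspDerivCoord] using mem_ker_fderiv_ftilde_iff.1 hw (Sum.inl (Fin.last _))

theorem Y_eq_of_mem_ker (hw : w ∈ 𝒦 p) (i : Fin k) :
    pz p * w.1 (Sum.inl (xo i)) + (pz p)^2 * w.1 (Sum.inl (xe i))
      + (px p (xo i) + 2 * pz p * px p (xe i)) * w.1 zIdx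
      + w.2 * sigmaF k m p (Sum.inr (Sum.inl i)) = 0 :=
  mem_ker_fderiv_ftilde_iff.1 hw (Sum.inr (Sum.inl i))

theorem Z_eq_of_mem_ker (hw : w ∈ 𝒦 p) :
    pz p * w.1 yIdx + (py p + 3 * (pz p)^2) * w.1 zIdx
      + w.2 * sigmaF k m p (Sum.inr (Sum.inr (Sum.inl ()))) = 0 :=
  mem_ker_fderiv_ftilde_iff.1 hw (Sum.inr (Sum.inr (Sum.inl ())))

theorem S_eq_zero_of_mem_ker (hw : w ∈ 𝒦 p) (j : Fin m) :
    w.1 (Sum.inr (Sum.inr (Sum.inr j))) = 0 := by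
  simpa [cuspDerivCoord, sigmaF_apply_S] using
    mem_ker_fderiv_ftilde_iff.1 hw (Sum.inr (Sum.inr (Sum.inr j)))

theorem Y_relation_of_mem_ker (hw : w ∈ 𝒦 p) (i : Fin k) :
    2 * px p (xe i) * w.2 + (px p (xo i) + 2 * pz p * px p (xe i)) * w.1 zIdx = 0 := by
  linear_combination Y_eq_of_mem_ker hw i - pz p * X_eq_of_mem_ker hw (xo i)
    - (pz p)^2 * X_eq_of_mem_ker hw (xe i) - w.2 * sigmaF_Y_sub_X p i

theorem Z_relation_of_mem_ker (hw : w ∈ 𝒦 p) :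
    6 * pz p * w.2 + (py p + 3 * (pz p)^2) * w.1 zIdx = 0 := by
  linear_combination Z_eq_of_mem_ker hw - pz p * X_last_eq_of_mem_ker hw - w.2 * sigmaF_Z_sub_X p

theorem eq_zero_of_mem_ker (hw : w ∈ 𝒦 p) (hz : w.1 zIdx = 0) (ht : w.2 = 0) : w = 0 := by
  refine Prod.ext ?_ ht
  ext (j | u | u | j)
  · simpa [ht] using X_eq_of_mem_ker hw j
  · simpa [ht] using X_last_eq_of_mem_ker hw
  · exact hz
  · exact S_eq_zero_of_mem_ker hw j

end Kernel

section Origin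

variable {p : Dom k m}

theorem sigmaF_eq_zero (hx : ∀ j, px p j = 0) (hz : pz p = 0) : sigmaF k m p = 0 := by
  ext (j | i | u | j)
  · simp [sigmaF_apply_X, hx, hz]
  · simp [sigmaF_apply_Y, hx]
  · simp [sigmaF_apply_Z, hz]
  · rfl

theorem ez_mem_ker (hx : ∀ j, px p j = 0) (hy : py p = 0) (hz : pz p = 0) :
    ((ez k m, 0) : Dom k m × ℝ) ∈ 𝒦 p := by
  rw [mem_ker_fderiv_ftilde_iff]
  rintro (j | i | u | j)
  · by_cases h : j.1 < 2*k <;> simp [cuspDerivCoord, ez, h]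
  all_goals simp [cuspDerivCoord, ez, hx, hy, hz]

theorem zero_one_mem_ker (hx : ∀ j, px p j = 0) (hz : pz p = 0) :
    ((0, 1) : Dom k m × ℝ) ∈ 𝒦 p := by
  rw [mem_ker_fderiv_ftilde_iff, sigmaF_eq_zero hx hz]
  simp

theorem ker_eq_span (hx : ∀ j, px p j = 0) (hy : py p = 0) (hz : pz p = 0) :
    𝒦 p = Submodule.span ℝ {((ez k m, 0) : Dom k m × ℝ), ((0, 1) : Dom k m × ℝ)} := by
  have hez := ez_mem_ker hx hy hz
  have h01 := zero_one_mem_ker hx hz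
  refine le_antisymm (fun w hw => ?_) (Submodule.span_le.2 ?_)
  · have hdecomp :
        w = w.1 zIdx • ((ez k m, 0) : Dom k m × ℝ) + w.2 • ((0, 1) : Dom k m × ℝ) := by
      rw [← sub_eq_zero]
      refine eq_zero_of_mem_ker (Submodule.sub_mem _ hw (add_mem (Submodule.smul_mem _ _ hez)
        (Submodule.smul_mem _ _ h01))) ?_ ?_ <;> simp [ez]
    rw [hdecomp]
    exact add_mem (Submodule.smul_mem _ _ (Submodule.subset_span (by simp)))
      (Submodule.smul_mem _ _ (Submodule.subset_span (by simp)))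
  · exact Set.insert_subset_iff.2 ⟨hez, Set.singleton_subset_iff.2 h01⟩

theorem finrank_span_ez_zero_one :
    Module.finrank ℝ
      (Submodule.span ℝ {((ez k m, 0) : Dom k m × ℝ), ((0, 1) : Dom k m × ℝ)}) = 2 := by
  rw [← Matrix.range_cons_cons_empty ((ez k m, 0) : Dom k m × ℝ) (0, 1) ![],
    finrank_span_eq_card]
  · simp
  rw [LinearIndependent.pair_iff]
  intro s t hst
  exact ⟨by simpa [ez] using congrArg (fun w : Dom k m × ℝ => w.1 zIdx) hst,
    by simpa using congrArg Prod.snd hst⟩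

end Origin

theorem exists_eq_xo_or_eq_xe (j : Fin (2*k)) : ∃ i, j = xo i ∨ j = xe i := by
  refine ⟨⟨j / 2, by omega⟩, ?_⟩
  rcases Nat.even_or_odd' j.1 with ⟨i, hi | hi⟩
  · exact Or.inl (Fin.ext (by simp only [xo]; omega))
  · exact Or.inr (Fin.ext (by simp only [xe]; omega))

theorem exists_ker_relation {p : Dom k m}
    (hp : ¬((∀ j, px p j = 0) ∧ py p = 0 ∧ pz p = 0)) :
    ∃ c : ℝ × ℝ, c ≠ 0 ∧ ∀ w ∈ 𝒦 p, c.1 * w.1 zIdx + c.2 * w.2 = 0 := by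
  by_cases hyz : py p = 0 ∧ pz p = 0
  · obtain ⟨hy, hz⟩ := hyz
    obtain ⟨j, hj⟩ := not_forall.1 fun hx => hp ⟨hx, hy, hz⟩
    obtain ⟨i, hji⟩ := exists_eq_xo_or_eq_xe j
    refine ⟨(px p (xo i) + 2 * pz p * px p (xe i), 2 * px p (xe i)), fun hc => hj ?_,
      fun w hw => by linear_combination Y_relation_of_mem_ker hw i⟩
    have hxe : px p (xe i) = 0 := by simpa using congrArg Prod.snd hc
    have hxo : px p (xo i) = 0 := by simpa [hz, hxe] using congrArg Prod.fst hc
    rcases hji with rfl | rfl <;> assumption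
  · refine ⟨(py p + 3 * (pz p)^2, 6 * pz p), fun hc => hyz ?_,
      fun w hw => by linear_combination Z_relation_of_mem_ker hw⟩
    have hz : pz p = 0 := by simpa using congrArg Prod.snd hc
    exact ⟨by simpa [hz] using congrArg Prod.fst hc, hz⟩

theorem finrank_ker_le_one {p : Dom k m} (hp : ¬((∀ j, px p j = 0) ∧ py p = 0 ∧ pz p = 0)) :
    Module.finrank ℝ (𝒦 p) ≤ 1 := by
  obtain ⟨c, hc, hrel⟩ := exists_ker_relation hp
  have hℓ : c.1 • LinearMap.fst ℝ ℝ ℝ + c.2 • LinearMap.snd ℝ ℝ ℝ ≠ 0 := fun h =>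
    hc (Prod.ext (by simpa using LinearMap.congr_fun h (1, 0))
      (by simpa using LinearMap.congr_fun h (0, 1)))
  have := Submodule.finrank_add_one_le_of_disjoint_of_le_ker hℓ
    (φ := (EuclideanSpace.projₗ zIdx).prodMap LinearMap.id)
    (Submodule.disjoint_def.2 fun w hw hφ =>
      eq_zero_of_mem_ker hw (congrArg Prod.fst hφ) (congrArg Prod.snd hφ))
    (fun w hw => by simpa using hrel w hw)
  simpa using this

end CuspNormalForm

theorem statement6_general (k m : ℕ) (p : Dom k m) :
    (((∀ j : Fin (2*k), px p j = 0) ∧ py p = 0 ∧ pz p = 0) →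
      LinearMap.ker (fderiv ℝ (ftilde k m) (p, 0) : Dom k m × ℝ →ₗ[ℝ] Cod k m) =
        Submodule.span ℝ {((ez k m, 0) : Dom k m × ℝ), ((0, 1) : Dom k m × ℝ)} ∧
      Module.finrank ℝ (LinearMap.ker (fderiv ℝ (ftilde k m) (p, 0) : Dom k m × ℝ →ₗ[ℝ] Cod k m)) = 2) ∧
    (¬((∀ j : Fin (2*k), px p j = 0) ∧ py p = 0 ∧ pz p = 0) →
      Module.finrank ℝ (LinearMap.ker (fderiv ℝ (ftilde k m) (p, 0) : Dom k m × ℝ →ₗ[ℝ] Cod k m)) ≤ 1) := by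
  refine ⟨fun ⟨hx, hy, hz⟩ => ?_, CuspNormalForm.finrank_ker_le_one⟩
  rw [CuspNormalForm.ker_eq_span hx hy hz]
  exact ⟨rfl, CuspNormalForm.finrank_span_ez_zero_one⟩

/-- if `x = 0`, `y = 0` and `z = 0` then the kernel of `Df̃_{(p,0)}` is the
two-dimensional span of `(e_z, 0)` and `(0, 1)`; if `(x, y, z) ≠ (0,0,0)` then
`dim ker Df̃_{(p,0)} ≤ 1`. -/
theorem statement6 (k m : ℕ) (hk : 1 ≤ k) (p : Dom k m) :
    (((∀ j : Fin (2*k), px p j = 0) ∧ py p = 0 ∧ pz p = 0) →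
      LinearMap.ker (fderiv ℝ (ftilde k m) (p, 0) : Dom k m × ℝ →ₗ[ℝ] Cod k m) =
        Submodule.span ℝ {((ez k m, 0) : Dom k m × ℝ), ((0, 1) : Dom k m × ℝ)} ∧
      Module.finrank ℝ (LinearMap.ker (fderiv ℝ (ftilde k m) (p, 0) : Dom k m × ℝ →ₗ[ℝ] Cod k m)) = 2) ∧
    (¬((∀ j : Fin (2*k), px p j = 0) ∧ py p = 0 ∧ pz p = 0) →
      Module.finrank ℝ (LinearMap.ker (fderiv ℝ (ftilde k m) (p, 0) : Dom k m × ℝ →ₗ[ℝ] Cod k m)) ≤ 1) :=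
  statement6_general k m p
end
end

section
/- Fix s ∈ ℝ^m and let q₀ = ((0,0,0,s), 0) ∈ ℝ^n × ℝ. Let K ⊂ ℝ^n × ℝ be the span of (e_z, 0) and (0,1), and let C ⊂ ℝ^{n+k} be the span of e_{Y_1}, …, e_{Y_k}, e_Z. Then: (i) K is the kernel of Df̃_{q₀} and C is the orthogonal complement of the range of Df̃_{q₀}; (ii) the map Φ : q ↦ Df̃_q from ℝ^n × ℝ to the space of linear maps ℝ^n × ℝ → ℝ^{n+k} is differentiable at q₀, and the linear map T : ℝ^n × ℝ → Hom(K, C) defined by T(v)(κ) = (orthogonal projection onto C of) (DΦ_{q₀}(v))(κ), for κ ∈ K, is surjective. (This expresses that the 1-jet extension of the de-suspension f̃ is transverse to the stratum of corank-2 linear maps at every corank-2 point of f̃.) -/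
noncomputable section

open scoped RealInnerProductSpace

/-- The point `(0, 0, 0, s) ∈ ℝⁿ`. -/
def pOfS (k m : ℕ) (s : Fin m → ℝ) : Dom k m :=
  (EuclideanSpace.equiv (DomIx k m) ℝ).symm fun q =>
    match q with
    | Sum.inl _ => 0
    | Sum.inr (Sum.inl _) => 0
    | Sum.inr (Sum.inr (Sum.inl _)) => 0
    | Sum.inr (Sum.inr (Sum.inr j)) => s j

/-- The standard basis vector `e_{Y_i}` (0-based `i`) of the codomain. -/
def eY (k m : ℕ) (i : Fin k) : Cod k m := EuclideanSpace.single (Sum.inr (Sum.inl i)) 1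

/-- The standard basis vector `e_Z` of the codomain. -/
def eZ (k m : ℕ) : Cod k m := EuclideanSpace.single (Sum.inr (Sum.inr (Sum.inl ()))) 1

/-- `K ⊆ ℝⁿ × ℝ`: the span of `(e_z, 0)` and `(0, 1)`. -/
def Kspan (k m : ℕ) : Submodule ℝ (Dom k m × ℝ) :=
  Submodule.span ℝ {((ez k m, 0) : Dom k m × ℝ), ((0, 1) : Dom k m × ℝ)}

/-- `C ⊆ ℝ^{n+k}`: the span of `e_{Y_1}, …, e_{Y_k}, e_Z`. -/
def Cspan (k m : ℕ) : Submodule ℝ (Cod k m) :=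
  Submodule.span ℝ (insert (eZ k m) (Set.range (eY k m)))

/-!
At `q₀ = (p₀, 0)` the section `σ` vanishes, so `Df̃_{q₀}(w, b) = Df_{p₀} w`; this linear map
forgets `z` and `t` and has no `Y`- and `Z`-components, which gives the kernel `K` and the
cokernel `C`. Differentiating `q ↦ Df̃_q` along `(u, 0)` at `q₀`, the term `t • Dσ` drops out,
so the second derivative sends `(e_z, 0)` to `D(∂f/∂z)_{p₀} u` and `(0, 1)` to `Dσ_{p₀} u`.
Modulo `Cᗮ` these are `(u_{x_{2i-1}}, u_y)` and `(2 u_{x_{2i}}, 6 u_z)`, which involve disjoint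
coordinates of `u` and can therefore be prescribed independently.
-/

section Calculus

variable {E F : Type*} [NormedAddCommGroup E] [NormedSpace ℝ E]
  [NormedAddCommGroup F] [NormedSpace ℝ F] {f : E → F}

theorem ContDiff.differentiable_fderiv (hf : ContDiff ℝ 2 f) : Differentiable ℝ (fderiv ℝ f) :=
  (hf.fderiv_right (m := 1) (by norm_num)).differentiable one_ne_zero

theorem ContDiff.differentiable_fderiv_apply (hf : ContDiff ℝ 2 f) (w : E) :
    Differentiable ℝ fun y => fderiv ℝ f y w :=
  fun y => (hf.differentiable_fderiv y).clm_apply (differentiableAt_const w)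

theorem fderiv_fderiv_apply {x : E} (hf : DifferentiableAt ℝ (fderiv ℝ f) x) (v w : E) :
    fderiv ℝ (fderiv ℝ f) x v w = fderiv ℝ (fun y => fderiv ℝ f y w) x v := by
  rw [fderiv_clm_apply hf (differentiableAt_const w)]
  simp

theorem HasFDerivAt.div_of_eq_zero {c d : E → ℝ} {c' : E →L[ℝ] ℝ} {x : E}
    (hc : HasFDerivAt c c' x) (hcx : c x = 0) (hd : DifferentiableAt ℝ d x) (hdx : d x ≠ 0) :
    HasFDerivAt (fun y => c y / d y) ((d x)⁻¹ • c') x := by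
  have h := hc.fun_mul ((hasDerivAt_inv hdx).comp_hasFDerivAt x hd.hasFDerivAt)
  simpa [div_eq_mul_inv, hcx] using h

end Calculus

section EuclideanCoordinates

variable {E : Type*} [NormedAddCommGroup E] [NormedSpace ℝ E] {ι : Type*}

def euclideanPi (L : ι → E →L[ℝ] ℝ) : E →L[ℝ] EuclideanSpace ℝ ι :=
  (EuclideanSpace.equiv ι ℝ).symm.toContinuousLinearMap ∘L ContinuousLinearMap.pi L

@[simp] theorem euclideanPi_apply (L : ι → E →L[ℝ] ℝ) (v : E) (i : ι) :
    euclideanPi L v i = L i v := rfl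

variable [Fintype ι]

theorem hasFDerivAt_euclideanPi {f : E → EuclideanSpace ℝ ι} {L : ι → E →L[ℝ] ℝ} {x : E}
    (h : ∀ i, HasFDerivAt (fun y => f y i) (L i) x) : HasFDerivAt f (euclideanPi L) x :=
  hasFDerivWithinAt_univ.mp (hasFDerivWithinAt_euclidean.mpr fun i => (h i).hasFDerivWithinAt)

theorem fderiv_euclidean_apply {f : E → EuclideanSpace ℝ ι} {x : E}
    (hf : DifferentiableAt ℝ f x) (v : E) (i : ι) :
    fderiv ℝ f x v i = fderiv ℝ (fun y => f y i) x v := by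
  have h : HasFDerivAt (fun y => f y i) ((EuclideanSpace.proj i).comp (fderiv ℝ f x)) x :=
    (EuclideanSpace.proj (𝕜 := ℝ) i).hasFDerivAt.comp x hf.hasFDerivAt
  rw [h.fderiv]
  rfl

end EuclideanCoordinates

theorem Submodule.mem_orthogonal_span_iff {E : Type*} [NormedAddCommGroup E]
    [InnerProductSpace ℝ E] {s : Set E} {v : E} :
    v ∈ (Submodule.span ℝ s)ᗮ ↔ ∀ u ∈ s, ⟪u, v⟫ = 0 := by
  rw [← Submodule.span_singleton_le_iff_mem, ← Submodule.isOrtho_iff_le, Submodule.isOrtho_span]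
  simp [real_inner_comm]

section Desuspension

open ContinuousLinearMap

variable {E F : Type*} [NormedAddCommGroup E] [NormedSpace ℝ E]
  [NormedAddCommGroup F] [NormedSpace ℝ F]

def desuspension (f σ : E → F) (q : E × ℝ) : F := f q.1 + q.2 • σ q.1

variable {f σ : E → F}

theorem ContDiff.desuspension {n : WithTop ℕ∞} (hf : ContDiff ℝ n f) (hσ : ContDiff ℝ n σ) :
    ContDiff ℝ n (desuspension f σ) :=
  (hf.comp contDiff_fst).add (contDiff_snd.smul (hσ.comp contDiff_fst))

theorem fderiv_desuspension_apply {p : E} (hf : DifferentiableAt ℝ f p)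
    (hσ : DifferentiableAt ℝ σ p) (t : ℝ) (w : E) (b : ℝ) :
    fderiv ℝ (desuspension f σ) (p, t) (w, b)
      = fderiv ℝ f p w + t • fderiv ℝ σ p w + b • σ p := by
  have h : HasFDerivAt (desuspension f σ) _ (p, t) :=
    (hf.hasFDerivAt.comp (f := Prod.fst) (p, t) hasFDerivAt_fst).fun_add
      (hasFDerivAt_snd.fun_smul (hσ.hasFDerivAt.comp (f := Prod.fst) (p, t) hasFDerivAt_fst))
  rw [h.fderiv]
  simp only [add_apply, comp_apply, coe_fst', coe_snd', smul_apply, smulRight_apply]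
  abel

theorem fderiv_fderiv_desuspension_apply (hf : ContDiff ℝ 2 f) (hσ : ContDiff ℝ 2 σ)
    (p u w : E) (b : ℝ) :
    fderiv ℝ (fderiv ℝ (desuspension f σ)) (p, 0) (u, 0) (w, b)
      = fderiv ℝ (fun y => fderiv ℝ f y w) p u + b • fderiv ℝ σ p u := by
  have hf1 : Differentiable ℝ f := hf.differentiable two_ne_zero
  have hσ1 : Differentiable ℝ σ := hσ.differentiable two_ne_zero
  have hDF : (fun q : E × ℝ => fderiv ℝ (desuspension f σ) q (w, b))
      = fun q => fderiv ℝ f q.1 w + q.2 • fderiv ℝ σ q.1 w + b • σ q.1 := by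
    funext q
    exact fderiv_desuspension_apply (hf1 q.1) (hσ1 q.1) q.2 w b
  have hD2F : HasFDerivAt
      (fun q : E × ℝ => fderiv ℝ f q.1 w + q.2 • fderiv ℝ σ q.1 w + b • σ q.1) _ (p, 0) :=
    (((hf.differentiable_fderiv_apply w p).hasFDerivAt.comp (f := Prod.fst) (p, 0)
      hasFDerivAt_fst).fun_add (hasFDerivAt_snd.fun_smul
        ((hσ.differentiable_fderiv_apply w p).hasFDerivAt.comp (f := Prod.fst) (p, 0)
          hasFDerivAt_fst))).fun_add
      (((hσ1 p).hasFDerivAt.comp (f := Prod.fst) (p, 0) hasFDerivAt_fst).fun_const_smul b)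
  rw [fderiv_fderiv_apply ((hf.desuspension hσ).differentiable_fderiv _), hDF, hD2F.fderiv]
  simp

end Desuspension

namespace CuspNormalForm

variable {k m : ℕ}

section Coordinates

variable (p : Dom k m)

@[simp] theorem cuspF_X (j : Fin (2*k+1)) :
    cuspF k m p (Sum.inl j) = if h : j.1 < 2*k then px p ⟨j.1, h⟩ else py p := rfl

@[simp] theorem cuspF_Y (i : Fin k) :
    cuspF k m p (Sum.inr (Sum.inl i)) = pz p * px p (xo i) + pz p ^ 2 * px p (xe i) := rfl

@[simp] theorem cuspF_Z (u : Unit) :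
    cuspF k m p (Sum.inr (Sum.inr (Sum.inl u))) = pz p * py p + pz p ^ 3 := rfl

@[simp] theorem cuspF_S (j : Fin m) : cuspF k m p (Sum.inr (Sum.inr (Sum.inr j))) = ps p j := rfl

@[simp] theorem sigmaF_X (j : Fin (2*k+1)) :
    sigmaF k m p (Sum.inl j) =
      if h : j.1 < 2*k then
        if h2 : j.1 % 2 = 0 then
          -2 * pz p * px p ⟨j.1+1, by omega⟩ / (1 + pz p ^ 2 + pz p ^ 4)
        else -2 * pz p ^ 2 * px p ⟨j.1, h⟩ / (1 + pz p ^ 2 + pz p ^ 4)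
      else -6 * pz p ^ 2 / (1 + pz p ^ 2) := rfl

@[simp] theorem sigmaF_Y (i : Fin k) :
    sigmaF k m p (Sum.inr (Sum.inl i)) = 2 * px p (xe i) / (1 + pz p ^ 2 + pz p ^ 4) := rfl

@[simp] theorem sigmaF_Z (u : Unit) :
    sigmaF k m p (Sum.inr (Sum.inr (Sum.inl u))) = 6 * pz p / (1 + pz p ^ 2) := rfl

@[simp] theorem sigmaF_S (j : Fin m) : sigmaF k m p (Sum.inr (Sum.inr (Sum.inr j))) = 0 := rfl

end Coordinates

section BasePoint

variable (s : Fin m → ℝ)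

@[simp] theorem px_pOfS (j : Fin (2*k)) : px (pOfS k m s) j = 0 := rfl
@[simp] theorem py_pOfS : py (pOfS k m s) = 0 := rfl
@[simp] theorem pz_pOfS : pz (pOfS k m s) = 0 := rfl
@[simp] theorem pOfS_x (j : Fin (2*k)) : pOfS k m s (Sum.inl j) = 0 := rfl
@[simp] theorem pOfS_z (u : Unit) : pOfS k m s (Sum.inr (Sum.inr (Sum.inl u))) = 0 := rfl

end BasePoint

theorem contDiff_cuspF {n : WithTop ℕ∞} : ContDiff ℝ n (cuspF k m) := by
  rw [contDiff_euclidean]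
  rintro (j | i | u | j)
  · simp only [cuspF_X, px, py]
    split_ifs <;> fun_prop
  · simp only [cuspF_Y, px, pz]; fun_prop
  · simp only [cuspF_Z, py, pz]; fun_prop
  · simp only [cuspF_S, ps]; fun_prop

theorem contDiff_sigmaF {n : WithTop ℕ∞} : ContDiff ℝ n (sigmaF k m) := by
  rw [contDiff_euclidean]
  rintro (j | i | u | j)
  · simp only [sigmaF_X, px, pz]
    split_ifs <;> fun_prop (disch := intro; positivity)
  · simp only [sigmaF_Y, px, pz]; fun_prop (disch := intro; positivity)
  · simp only [sigmaF_Z, pz]; fun_prop (disch := intro; positivity)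
  · simp only [sigmaF_S]; fun_prop

theorem ftilde_eq_desuspension : ftilde k m = desuspension (cuspF k m) (sigmaF k m) := rfl

theorem contDiff_ftilde {n : WithTop ℕ∞} : ContDiff ℝ n (ftilde k m) :=
  contDiff_cuspF.desuspension contDiff_sigmaF

theorem sigmaF_pOfS (s : Fin m → ℝ) : sigmaF k m (pOfS k m s) = 0 := by
  ext (j | i | u | j)
  · simp only [sigmaF_X, px_pOfS, pz_pOfS]
    split_ifs <;> simp
  all_goals simp

abbrev dx (j : Fin (2*k)) : Dom k m →L[ℝ] ℝ := EuclideanSpace.proj (Sum.inl j)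
abbrev dy : Dom k m →L[ℝ] ℝ := EuclideanSpace.proj (Sum.inr (Sum.inl ()))
abbrev dz : Dom k m →L[ℝ] ℝ := EuclideanSpace.proj (Sum.inr (Sum.inr (Sum.inl ())))
abbrev ds (j : Fin m) : Dom k m →L[ℝ] ℝ := EuclideanSpace.proj (Sum.inr (Sum.inr (Sum.inr j)))

def cuspRow (p : Dom k m) : CodIx k m → (Dom k m →L[ℝ] ℝ)
  | Sum.inl j => if h : j.1 < 2*k then dx ⟨j.1, h⟩ else dy
  | Sum.inr (Sum.inl i) =>
      pz p • dx (xo i) + pz p ^ 2 • dx (xe i) + (px p (xo i) + 2 * pz p * px p (xe i)) • dz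
  | Sum.inr (Sum.inr (Sum.inl _)) => pz p • dy + (py p + 3 * pz p ^ 2) • dz
  | Sum.inr (Sum.inr (Sum.inr j)) => ds j

theorem fderiv_cuspF (p : Dom k m) : fderiv ℝ (cuspF k m) p = euclideanPi (cuspRow p) := by
  refine (hasFDerivAt_euclideanPi fun q => ?_).fderiv
  have hx (j) : HasFDerivAt (fun p : Dom k m => px p j) (dx j) p := (dx j).hasFDerivAt
  have hy : HasFDerivAt (fun p : Dom k m => py p) dy p := dy.hasFDerivAt
  have hz : HasFDerivAt (fun p : Dom k m => pz p) dz p := dz.hasFDerivAt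
  rcases q with j | i | u | j
  · simp only [cuspF_X, cuspRow]
    split_ifs
    · exact hx _
    · exact hy
  · refine ((hz.fun_mul (hx _)).fun_add ((hz.pow 2).fun_mul (hx _))).congr_fderiv ?_
    ext v
    simp only [cuspRow, add_apply, smul_apply,
      PiLp.proj_apply, smul_eq_mul, nsmul_eq_mul, Nat.cast_ofNat, Nat.add_one_sub_one, pow_one]
    ring
  · refine ((hz.fun_mul hy).fun_add (hz.pow 3)).congr_fderiv ?_
    ext v
    simp only [cuspRow, add_apply, smul_apply,
      PiLp.proj_apply, smul_eq_mul, nsmul_eq_mul, Nat.cast_ofNat, Nat.add_one_sub_one]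
    ring
  · exact (ds j).hasFDerivAt

theorem fderiv_cuspF_ez_Y (p : Dom k m) (i : Fin k) :
    fderiv ℝ (cuspF k m) p (ez k m) (Sum.inr (Sum.inl i))
      = px p (xo i) + 2 * pz p * px p (xe i) := by
  simp [fderiv_cuspF, cuspRow, ez]

theorem fderiv_cuspF_ez_Z (p : Dom k m) :
    fderiv ℝ (cuspF k m) p (ez k m) (Sum.inr (Sum.inr (Sum.inl ()))) = py p + 3 * pz p ^ 2 := by
  simp [fderiv_cuspF, cuspRow, ez]

theorem fderiv_fderiv_cuspF_ez_Y (s : Fin m → ℝ) (u : Dom k m) (i : Fin k) :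
    fderiv ℝ (fun y => fderiv ℝ (cuspF k m) y (ez k m)) (pOfS k m s) u (Sum.inr (Sum.inl i))
      = px u (xo i) := by
  rw [fderiv_euclidean_apply (contDiff_cuspF.differentiable_fderiv_apply _ _)]
  simp only [fderiv_cuspF_ez_Y]
  have h : HasFDerivAt (fun y : Dom k m => px y (xo i) + 2 * pz y * px y (xe i)) (dx (xo i))
      (pOfS k m s) :=
    ((dx (xo i)).hasFDerivAt.fun_add
      ((dz.hasFDerivAt.const_mul 2).fun_mul (dx (xe i)).hasFDerivAt)).congr_fderiv (by simp)
  rw [h.fderiv]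
  rfl

theorem fderiv_fderiv_cuspF_ez_Z (s : Fin m → ℝ) (u : Dom k m) :
    fderiv ℝ (fun y => fderiv ℝ (cuspF k m) y (ez k m)) (pOfS k m s) u
      (Sum.inr (Sum.inr (Sum.inl ()))) = py u := by
  rw [fderiv_euclidean_apply (contDiff_cuspF.differentiable_fderiv_apply _ _)]
  simp only [fderiv_cuspF_ez_Z]
  have h : HasFDerivAt (fun y : Dom k m => py y + 3 * pz y ^ 2) dy (pOfS k m s) :=
    (dy.hasFDerivAt.fun_add ((dz.hasFDerivAt.pow 2).const_mul 3)).congr_fderiv (by simp)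
  rw [h.fderiv]
  rfl

theorem fderiv_sigmaF_pOfS_Y (s : Fin m → ℝ) (u : Dom k m) (i : Fin k) :
    fderiv ℝ (sigmaF k m) (pOfS k m s) u (Sum.inr (Sum.inl i)) = 2 * px u (xe i) := by
  rw [fderiv_euclidean_apply ((contDiff_sigmaF (n := 1)).differentiable one_ne_zero _)]
  simp only [sigmaF_Y]
  have h : HasFDerivAt (fun y : Dom k m => 2 * px y (xe i) / (1 + pz y ^ 2 + pz y ^ 4))
      ((2 : ℝ) • dx (xe i)) (pOfS k m s) :=
    (((dx (xe i)).hasFDerivAt.const_mul 2).div_of_eq_zero (by simp) (by simp only [pz]; fun_prop)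
      (by simp)).congr_fderiv (by simp)
  rw [h.fderiv]
  rfl

theorem fderiv_sigmaF_pOfS_Z (s : Fin m → ℝ) (u : Dom k m) :
    fderiv ℝ (sigmaF k m) (pOfS k m s) u (Sum.inr (Sum.inr (Sum.inl ()))) = 6 * pz u := by
  rw [fderiv_euclidean_apply ((contDiff_sigmaF (n := 1)).differentiable one_ne_zero _)]
  simp only [sigmaF_Z]
  have h : HasFDerivAt (fun y : Dom k m => 6 * pz y / (1 + pz y ^ 2)) ((6 : ℝ) • dz)
      (pOfS k m s) :=
    ((dz.hasFDerivAt.const_mul 6).div_of_eq_zero (by simp) (by simp only [pz]; fun_prop)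
      (by simp)).congr_fderiv (by simp)
  rw [h.fderiv]
  rfl

theorem fderiv_ftilde_pOfS_apply (s : Fin m → ℝ) (w : Dom k m) (b : ℝ) :
    fderiv ℝ (ftilde k m) (pOfS k m s, 0) (w, b) = fderiv ℝ (cuspF k m) (pOfS k m s) w := by
  rw [ftilde_eq_desuspension, fderiv_desuspension_apply
    ((contDiff_cuspF (n := 1)).differentiable one_ne_zero _)
    ((contDiff_sigmaF (n := 1)).differentiable one_ne_zero _)]
  simp [sigmaF_pOfS]

theorem fderiv_cuspF_pOfS_eq_zero_iff (s : Fin m → ℝ) (w : Dom k m) :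
    fderiv ℝ (cuspF k m) (pOfS k m s) w = 0 ↔ w = pz w • ez k m := by
  constructor
  · intro h
    have hX (j : Fin (2*k+1)) := congrArg (· (Sum.inl j)) h
    have hS (j : Fin m) := congrArg (· (Sum.inr (Sum.inr (Sum.inr j)))) h
    simp only [fderiv_cuspF, euclideanPi_apply, cuspRow] at hX hS
    ext (j | u | u | j)
    · simpa [ez] using hX ⟨j.1, by omega⟩
    · simpa [ez] using hX ⟨2*k, by omega⟩
    · simp [ez, pz]
    · simpa [ez] using hS j
  · intro h
    rw [h, map_smul]
    ext (j | i | u | j)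
    · simp only [fderiv_cuspF, PiLp.smul_apply, euclideanPi_apply, cuspRow]
      split_ifs <;> simp [ez]
    all_goals simp [fderiv_cuspF, cuspRow, ez]

theorem ker_fderiv_ftilde (s : Fin m → ℝ) :
    LinearMap.ker (fderiv ℝ (ftilde k m) (pOfS k m s, 0) : Dom k m × ℝ →ₗ[ℝ] Cod k m)
      = Kspan k m := by
  ext ⟨w, b⟩
  rw [LinearMap.mem_ker, ContinuousLinearMap.coe_coe, fderiv_ftilde_pOfS_apply,
    fderiv_cuspF_pOfS_eq_zero_iff, Kspan, Submodule.mem_span_pair]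
  constructor
  · intro h
    exact ⟨pz w, b, Prod.ext (by simpa using h.symm) (by simp)⟩
  · rintro ⟨c, d, hcd⟩
    obtain ⟨rfl, -⟩ := Prod.ext_iff.mp hcd
    simp [ez, pz]

theorem mem_orthogonal_Cspan_iff (v : Cod k m) :
    v ∈ (Cspan k m)ᗮ ↔
      (∀ i, v (Sum.inr (Sum.inl i)) = 0) ∧ v (Sum.inr (Sum.inr (Sum.inl ()))) = 0 := by
  rw [Cspan, Submodule.mem_orthogonal_span_iff]
  simp [eY, eZ, EuclideanSpace.inner_single_left, and_comm]

theorem range_fderiv_ftilde (s : Fin m → ℝ) :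
    LinearMap.range (fderiv ℝ (ftilde k m) (pOfS k m s, 0) : Dom k m × ℝ →ₗ[ℝ] Cod k m)
      = (Cspan k m)ᗮ := by
  ext v
  rw [mem_orthogonal_Cspan_iff]
  constructor
  · rintro ⟨⟨w, b⟩, rfl⟩
    simp [fderiv_ftilde_pOfS_apply, fderiv_cuspF, cuspRow]
  · rintro ⟨hY, hZ⟩
    refine ⟨(WithLp.toLp 2 fun
      | Sum.inl j => v (Sum.inl ⟨j.1, by omega⟩)
      | Sum.inr (Sum.inl _) => v (Sum.inl ⟨2*k, by omega⟩)
      | Sum.inr (Sum.inr (Sum.inl _)) => 0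
      | Sum.inr (Sum.inr (Sum.inr j)) => v (Sum.inr (Sum.inr (Sum.inr j))), 0), ?_⟩
    rw [ContinuousLinearMap.coe_coe, fderiv_ftilde_pOfS_apply, fderiv_cuspF]
    ext (j | i | u | j)
    · simp only [euclideanPi_apply, cuspRow]
      split_ifs
      · rfl
      · exact congrArg (fun j => v (Sum.inl j)) (Fin.ext (by simp only; omega))
    · simp [cuspRow, hY]
    · simp [cuspRow, hZ]
    · simp [cuspRow]

theorem orthogonalProjectionOnto_Cspan_eq {w : Cod k m} {c : Cspan k m}
    (hY : ∀ i, w (Sum.inr (Sum.inl i)) = (c : Cod k m) (Sum.inr (Sum.inl i)))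
    (hZ : w (Sum.inr (Sum.inr (Sum.inl ()))) = (c : Cod k m) (Sum.inr (Sum.inr (Sum.inl ())))) :
    (Cspan k m).orthogonalProjectionOnto w = c := by
  refine Subtype.ext (Submodule.eq_starProjection_of_mem_orthogonal c.2 ?_)
  rw [mem_orthogonal_Cspan_iff]
  simp [hY, hZ]

/-- The `x`-coordinate with 0-based index `j` is `x_{2i-1}` for `j = 2i` and `x_{2i}` for
`j = 2i + 1`; the factors `1/2` and `1/6` undo those in `Dσ_{p₀}`. -/
def liftPair (a b : Cod k m) : Dom k m := WithLp.toLp 2 fun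
  | Sum.inl j =>
      if j.1 % 2 = 0 then a (Sum.inr (Sum.inl ⟨j.1 / 2, by omega⟩))
      else b (Sum.inr (Sum.inl ⟨j.1 / 2, by omega⟩)) / 2
  | Sum.inr (Sum.inl _) => a (Sum.inr (Sum.inr (Sum.inl ())))
  | Sum.inr (Sum.inr (Sum.inl _)) => b (Sum.inr (Sum.inr (Sum.inl ()))) / 6
  | Sum.inr (Sum.inr (Sum.inr _)) => 0

theorem px_liftPair_xo (a b : Cod k m) (i : Fin k) :
    px (liftPair a b) (xo i) = a (Sum.inr (Sum.inl i)) := by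
  simp [liftPair, px, xo]

theorem px_liftPair_xe (a b : Cod k m) (i : Fin k) :
    px (liftPair a b) (xe i) = b (Sum.inr (Sum.inl i)) / 2 := by
  simp only [liftPair, px, xe]
  rw [if_neg (by omega)]
  exact congrArg (fun i => b (Sum.inr (Sum.inl i)) / 2) (Fin.ext (by simp only; omega))

theorem py_liftPair (a b : Cod k m) : py (liftPair a b) = a (Sum.inr (Sum.inr (Sum.inl ()))) :=
  rfl

theorem pz_liftPair (a b : Cod k m) :
    pz (liftPair a b) = b (Sum.inr (Sum.inr (Sum.inl ()))) / 6 :=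
  rfl

theorem fderiv_fderiv_ftilde_ez (s : Fin m → ℝ) (u : Dom k m) :
    fderiv ℝ (fderiv ℝ (ftilde k m)) (pOfS k m s, 0) (u, 0) (ez k m, 0)
      = fderiv ℝ (fun y => fderiv ℝ (cuspF k m) y (ez k m)) (pOfS k m s) u := by
  rw [ftilde_eq_desuspension, fderiv_fderiv_desuspension_apply contDiff_cuspF contDiff_sigmaF,
    zero_smul, add_zero]

theorem fderiv_fderiv_ftilde_dt (s : Fin m → ℝ) (u : Dom k m) :
    fderiv ℝ (fderiv ℝ (ftilde k m)) (pOfS k m s, 0) (u, 0) (0, 1)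
      = fderiv ℝ (sigmaF k m) (pOfS k m s) u := by
  rw [ftilde_eq_desuspension, fderiv_fderiv_desuspension_apply contDiff_cuspF contDiff_sigmaF]
  simp

theorem orthogonalProjectionOnto_fderiv_fderiv_ftilde_ez (s : Fin m → ℝ) (a b : Cspan k m) :
    (Cspan k m).orthogonalProjectionOnto
      (fderiv ℝ (fderiv ℝ (ftilde k m)) (pOfS k m s, 0) (liftPair a b, 0) (ez k m, 0)) = a := by
  rw [fderiv_fderiv_ftilde_ez]
  apply orthogonalProjectionOnto_Cspan_eq
  · intro i
    rw [fderiv_fderiv_cuspF_ez_Y, px_liftPair_xo]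
  · rw [fderiv_fderiv_cuspF_ez_Z, py_liftPair]

theorem orthogonalProjectionOnto_fderiv_fderiv_ftilde_dt (s : Fin m → ℝ) (a b : Cspan k m) :
    (Cspan k m).orthogonalProjectionOnto
      (fderiv ℝ (fderiv ℝ (ftilde k m)) (pOfS k m s, 0) (liftPair a b, 0) (0, 1)) = b := by
  rw [fderiv_fderiv_ftilde_dt]
  apply orthogonalProjectionOnto_Cspan_eq
  · intro i
    rw [fderiv_sigmaF_pOfS_Y, px_liftPair_xe]
    ring
  · rw [fderiv_sigmaF_pOfS_Z, pz_liftPair]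
    ring

end CuspNormalForm

theorem statement8_general (k m : ℕ) (s : Fin m → ℝ) :
    Kspan k m = LinearMap.ker (fderiv ℝ (ftilde k m) (pOfS k m s, 0) : Dom k m × ℝ →ₗ[ℝ] Cod k m) ∧
    Cspan k m = (LinearMap.range (fderiv ℝ (ftilde k m) (pOfS k m s, 0) : Dom k m × ℝ →ₗ[ℝ] Cod k m))ᗮ ∧
    DifferentiableAt ℝ (fun q => fderiv ℝ (ftilde k m) q) (pOfS k m s, 0) ∧
    ∀ L : Kspan k m →ₗ[ℝ] Cspan k m, ∃ v : Dom k m × ℝ, ∀ κ : Kspan k m,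
      (Cspan k m).orthogonalProjectionOnto
          ((fderiv ℝ (fun q => fderiv ℝ (ftilde k m) q) (pOfS k m s, 0) v) (κ : Dom k m × ℝ))
        = L κ := by
  refine ⟨(CuspNormalForm.ker_fderiv_ftilde s).symm,
    by rw [CuspNormalForm.range_fderiv_ftilde, Submodule.orthogonal_orthogonal],
    CuspNormalForm.contDiff_ftilde.differentiable_fderiv _, fun L => ?_⟩
  have hez : ((ez k m, 0) : Dom k m × ℝ) ∈ Kspan k m := Submodule.subset_span (by simp)
  have hdt : (((0 : Dom k m), 1) : Dom k m × ℝ) ∈ Kspan k m := Submodule.subset_span (by simp)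
  refine ⟨(CuspNormalForm.liftPair (L ⟨_, hez⟩) (L ⟨_, hdt⟩), 0), fun κ => ?_⟩
  obtain ⟨c, d, hκ⟩ := Submodule.mem_span_pair.mp κ.2
  obtain rfl : κ = c • ⟨_, hez⟩ + d • ⟨_, hdt⟩ := Subtype.ext hκ.symm
  simp only [Submodule.coe_add, Submodule.coe_smul, map_add, map_smul,
    CuspNormalForm.orthogonalProjectionOnto_fderiv_fderiv_ftilde_ez,
    CuspNormalForm.orthogonalProjectionOnto_fderiv_fderiv_ftilde_dt]

/-- at `q₀ = ((0,0,0,s), 0)`, (i) `K` is the kernel of `Df̃_{q₀}` and `C` is the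
orthogonal complement of the range of `Df̃_{q₀}`; (ii) the map `Φ : q ↦ Df̃_q` is
differentiable at `q₀`, and the linear map `T : ℝⁿ × ℝ → Hom(K, C)`,
`T(v)(κ) = proj_C ((DΦ_{q₀}(v))(κ))`, is surjective. -/
theorem statement8 (k m : ℕ) (hk : 1 ≤ k) (s : Fin m → ℝ) :
    Kspan k m = LinearMap.ker (fderiv ℝ (ftilde k m) (pOfS k m s, 0) : Dom k m × ℝ →ₗ[ℝ] Cod k m) ∧
    Cspan k m = (LinearMap.range (fderiv ℝ (ftilde k m) (pOfS k m s, 0) : Dom k m × ℝ →ₗ[ℝ] Cod k m))ᗮ ∧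
    DifferentiableAt ℝ (fun q => fderiv ℝ (ftilde k m) q) (pOfS k m s, 0) ∧
    ∀ L : Kspan k m →ₗ[ℝ] Cspan k m, ∃ v : Dom k m × ℝ, ∀ κ : Kspan k m,
      (Cspan k m).orthogonalProjectionOnto
          ((fderiv ℝ (fun q => fderiv ℝ (ftilde k m) q) (pOfS k m s, 0) v) (κ : Dom k m × ℝ))
        = L κ :=
  statement8_general k m s
end
end
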